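/- arXiv:1804.08710 — 5 statements merged into one kernel-verified Lean document; each statement's English description precedes it below -/
import Mathlib

section
/- In a bicategory B, for a 1-morphism i : a ⟶ b the following are equivalent: (1) there exists a 1-morphism L : b ⟶ a and an adjunction L ⊣ i whose counit 2-morphism i ≫ L ⟶ 𝟙_a (the composite of i followed by L, mapped to the identity of a) is invertible (i.e. i is a left split subobject of b); (2) i admits a left adjoint and i is representably fully faithful, meaning that for every object x of B the functor between hom-categories Hom(x, a) ⥤ Hom(x, b) given by postcomposition with i is fully faithful. -/
open CategoryTheory Bicategory

universe w v u

/-!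
Whiskering the unit and counit of `L ⊣ i` on the left by `h : x ⟶ b` (resp. `k : x ⟶ a`) gives an
adjunction `(· ≫ L) ⊣ (· ≫ i)` between hom-categories, whose counit at `k` is `k ◁ ε` up to
coherence isomorphisms. An ordinary right adjoint is fully faithful exactly when its counit is
invertible; so `ε` invertible makes every `(· ≫ i)` fully faithful, and conversely full faithfulness
of `(· ≫ i)` on `Hom(a, a)` makes the counit at `𝟙 a`, which is `ε` up to a unitor, invertible.
-/

namespace CategoryTheory.Bicategory.Adjunction

variable {B : Type u} [Bicategory.{w, v} B] {a b : B} {L : b ⟶ a} {i : a ⟶ b}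

@[simps]
def postcomp (adj : L ⊣ i) (x : B) : Bicategory.postcomp x L ⊣ Bicategory.postcomp x i where
  unit :=
    { app := fun h => (ρ_ h).inv ≫ h ◁ adj.unit ≫ (α_ h L i).inv
      naturality := by
        intros
        dsimp [Bicategory.postcomp]
        rw [rightUnitor_inv_naturality_assoc, ← whisker_exchange_assoc]
        simp }
  counit :=
    { app := fun k => (α_ k i L).hom ≫ k ◁ adj.counit ≫ (ρ_ k).hom
      naturality := by
        intros
        dsimp [Bicategory.postcomp]
        rw [associator_naturality_left_assoc, ← whisker_exchange_assoc]
        simp }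
  left_triangle_components h := by
    dsimp [Bicategory.postcomp]
    calc ((ρ_ h).inv ≫ h ◁ adj.unit ≫ (α_ h L i).inv) ▷ L ≫
          (α_ (h ≫ L) i L).hom ≫ (h ≫ L) ◁ adj.counit ≫ (ρ_ (h ≫ L)).hom
        = 𝟙 _ ⊗≫ h ◁ leftZigzag adj.unit adj.counit ⊗≫ 𝟙 _ := by bicategory
      _ = 𝟙 _ ⊗≫ h ◁ ((λ_ L).hom ≫ (ρ_ L).inv) ⊗≫ 𝟙 _ := by rw [adj.left_triangle]
      _ = 𝟙 (h ≫ L) := by bicategory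
  right_triangle_components k := by
    dsimp [Bicategory.postcomp]
    calc ((ρ_ (k ≫ i)).inv ≫ (k ≫ i) ◁ adj.unit ≫ (α_ (k ≫ i) L i).inv) ≫
          ((α_ k i L).hom ≫ k ◁ adj.counit ≫ (ρ_ k).hom) ▷ i
        = 𝟙 _ ⊗≫ k ◁ rightZigzag adj.unit adj.counit ⊗≫ 𝟙 _ := by bicategory
      _ = 𝟙 _ ⊗≫ k ◁ ((ρ_ i).hom ≫ (λ_ i).inv) ⊗≫ 𝟙 _ := by rw [adj.right_triangle]
      _ = 𝟙 (k ≫ i) := by bicategory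

theorem postcomp_counit_app_id (adj : L ⊣ i) :
    (adj.postcomp a).counit.app (𝟙 a) = (λ_ i).hom ▷ L ≫ adj.counit := by
  simp only [postcomp_counit_app]
  bicategory

instance isIso_postcomp_counit (adj : L ⊣ i) [IsIso adj.counit] (x : B) :
    IsIso (adj.postcomp x).counit :=
  have (k : x ⟶ a) : IsIso ((adj.postcomp x).counit.app k) :=
    inferInstanceAs (IsIso ((α_ k i L).hom ≫ k ◁ adj.counit ≫ (ρ_ k).hom))
  NatIso.isIso_of_isIso_app _

theorem isIso_counit_of_isIso_postcomp_counit (adj : L ⊣ i) [IsIso (adj.postcomp a).counit] :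
    IsIso adj.counit := by
  have : IsIso ((λ_ i).hom ▷ L ≫ adj.counit) := by
    rw [← postcomp_counit_app_id]
    exact NatIso.isIso_app_of_isIso _ _
  exact IsIso.of_isIso_comp_left ((λ_ i).hom ▷ L) adj.counit

theorem isIso_counit_iff_postcomp_full_faithful (adj : L ⊣ i) :
    IsIso adj.counit ↔
      ∀ x : B, (Bicategory.postcomp x i).Full ∧ (Bicategory.postcomp x i).Faithful := by
  constructor
  · intro _ x
    let hff := (adj.postcomp x).fullyFaithfulROfIsIsoCounit
    exact ⟨hff.full, hff.faithful⟩
  · intro hff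
    have := (hff a).1
    have := (hff a).2
    exact adj.isIso_counit_of_isIso_postcomp_counit

end CategoryTheory.Bicategory.Adjunction

/-- In a bicategory, a 1-morphism `i : a ⟶ b` is a left split subobject (i.e. admits a left
adjoint `L` whose counit `i ≫ L ⟶ 𝟙 a` is invertible) if and only if `i` admits a left adjoint
and is representably fully faithful (postcomposition with `i` on each hom-category
`Hom(x, a) ⥤ Hom(x, b)` is fully faithful). -/
theorem left_split_subobject_iff {B : Type u} [Bicategory.{w, v} B] {a b : B} (i : a ⟶ b) :
    (∃ (L : b ⟶ a) (adj : Bicategory.Adjunction L i), IsIso adj.counit) ↔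
      ((∃ L : b ⟶ a, Nonempty (Bicategory.Adjunction L i)) ∧
        ∀ x : B, (postcomp x i : (x ⟶ a) ⥤ (x ⟶ b)).Full ∧
          (postcomp x i : (x ⟶ a) ⥤ (x ⟶ b)).Faithful) := by
  constructor
  · rintro ⟨L, adj, hε⟩
    exact ⟨⟨L, ⟨adj⟩⟩, adj.isIso_counit_iff_postcomp_full_faithful.mp hε⟩
  · rintro ⟨⟨L, ⟨adj⟩⟩, hff⟩
    exact ⟨L, adj, adj.isIso_counit_iff_postcomp_full_faithful.mpr hff⟩
end

section
/- Let C be a small category and D a category with all filtered colimits, and let F : Ind C ⥤ D be a functor. Then F preserves filtered colimits if and only if F, together with the identity natural transformation on F ∘ Ind.yoneda, is a left Kan extension of F ∘ Ind.yoneda along Ind.yoneda : C ⥤ Ind C. In particular, two filtered-colimit-preserving functors Ind C ⥤ D whose composites with Ind.yoneda are naturally isomorphic are themselves naturally isomorphic. -/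
/-!
Every ind-object `X` is the filtered colimit of the representables over it: `Ind.yoneda` is dense
and the categories `CostructuredArrow Ind.yoneda X` are filtered. Hence a functor preserving
filtered colimits is the pointwise left Kan extension of its restriction along `Ind.yoneda`.

Conversely, representables are finitely presentable in `Ind C`, so a map `Ind.yoneda A ⟶ colim K`
out of one of them factors through some `K j`, uniquely up to the transition maps. A cocone `s`
over `K ⋙ F` therefore induces a cocone with point `s.pt` over the diagram whose colimit is, by
the pointwise Kan extension property, `F (colim K)`; this gives `F.mapCocone` its universal
property. Uniqueness of left Kan extensions yields the second statement.
-/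

open CategoryTheory Limits

namespace CategoryTheory

section

variable {C : Type*} [Category* C] {E : Type*} [Category* E]

noncomputable def Functor.DenseAt.ofCompFullyFaithful {L : C ⥤ E} {E' : Type*} [Category* E']
    {G : E ⥤ E'} [G.Full] [G.Faithful] {Y : E} (h : (L ⋙ G).DenseAt (G.obj Y)) : L.DenseAt Y :=
  isColimitOfReflects G <|
    (h.whiskerEquivalence (CostructuredArrow.post L G Y).asEquivalence).ofIsoColimit
      (Cocone.ext (Iso.refl _) fun _ => by
        simp only [Functor.mapCocone_ι_app, Functor.LeftExtension.coconeAt_ι_app,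
          Cocone.whisker_ι, Functor.whiskerLeft_app]
        erw [Category.id_comp, Category.comp_id, Category.id_comp]
        rfl)

noncomputable def Functor.DenseAt.isPointwiseLeftKanExtensionAt {D : Type*} [Category* D]
    {L : C ⥤ E} {Y : E} (hY : L.DenseAt Y) (F : E ⥤ D)
    [PreservesColimit (CostructuredArrow.proj L Y ⋙ L) F] :
    (Functor.LeftExtension.mk F (𝟙 (L ⋙ F))).IsPointwiseLeftKanExtensionAt Y :=
  (isColimitOfPreserves F hY).ofIsoColimit (Cocone.ext (Iso.refl _) fun _ => by
    simp only [Functor.mapCocone_ι_app, Functor.LeftExtension.coconeAt_ι_app]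
    erw [Category.id_comp, Category.comp_id, Category.id_comp]
    rfl)

end

namespace Limits.IsColimit

variable {E : Type*} [Category.{v} E] {D : Type*} [Category.{v} D]
  {J : Type*} [Category* J] {K : J ⥤ E} {c : Cocone K} (hc : IsColimit c)
  (F : E ⥤ D) (s : Cocone (K ⋙ F))

/-- `p ≫ c.ι.app j ↦ F.map p ≫ s.ι.app j`, well defined since `Hom(X, -)` preserves `c`. -/
noncomputable def coyonedaDesc (X : E) [PreservesColimit K (coyoneda.obj (Opposite.op X))] :
    (X ⟶ c.pt) → (F.obj X ⟶ s.pt) :=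
  (isColimitOfPreserves (coyoneda.obj (Opposite.op X)) hc).desc
    { pt := F.obj X ⟶ s.pt
      ι :=
        { app j := ↾fun p => F.map p ≫ s.ι.app j
          naturality j j' u := by
            ext p
            simp [← s.w u] } }

lemma coyonedaDesc_comp_ι {X : E} [PreservesColimit K (coyoneda.obj (Opposite.op X))]
    {j : J} (p : X ⟶ K.obj j) :
    hc.coyonedaDesc F s X (p ≫ c.ι.app j) = F.map p ≫ s.ι.app j :=
  ConcreteCategory.congr_hom ((isColimitOfPreserves (coyoneda.obj (Opposite.op X)) hc).fac _ j) p

lemma map_comp_coyonedaDesc {X X' : E} [PreservesColimit K (coyoneda.obj (Opposite.op X))]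
    [PreservesColimit K (coyoneda.obj (Opposite.op X'))] (f : X' ⟶ X) (g : X ⟶ c.pt) :
    F.map f ≫ hc.coyonedaDesc F s X g = hc.coyonedaDesc F s X' (f ≫ g) := by
  obtain ⟨j, p, rfl⟩ := exists_hom_of_preservesColimit_coyoneda hc g
  rw [← Category.assoc, coyonedaDesc_comp_ι, coyonedaDesc_comp_ι, F.map_comp_assoc]

end Limits.IsColimit

namespace Functor.LeftExtension

variable {C : Type*} [Category* C] {E : Type*} [Category.{v} E] {D : Type*} [Category.{v} D]
  {L : C ⥤ E} {H : C ⥤ D} {Ext : LeftExtension L H}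
  {J : Type*} [Category* J] {K : J ⥤ E} {c : Cocone K} (hc : IsColimit c)
  [∀ A, PreservesColimit K (coyoneda.obj (Opposite.op (L.obj A)))]

noncomputable def descCoconeAt (s : Cocone (K ⋙ Ext.right)) :
    CostructuredArrow.proj L c.pt ⋙ H ⟶ (Functor.const _).obj s.pt where
  app g := Ext.hom.app g.left ≫ hc.coyonedaDesc Ext.right s _ g.hom
  naturality g g' ψ := by
    have h := Ext.hom.naturality_assoc ψ.left (hc.coyonedaDesc Ext.right s _ g'.hom)
    dsimp at h ⊢
    rw [hc.map_comp_coyonedaDesc, CostructuredArrow.w ψ] at h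
    rw [Category.comp_id]
    exact h

noncomputable def IsPointwiseLeftKanExtension.mapCoconeDesc
    (hExt : Ext.IsPointwiseLeftKanExtension) (s : Cocone (K ⋙ Ext.right)) :
    Ext.right.obj c.pt ⟶ s.pt :=
  (hExt c.pt).homEquiv.symm (descCoconeAt hc s)

lemma IsPointwiseLeftKanExtension.hom_app_map_mapCoconeDesc
    (hExt : Ext.IsPointwiseLeftKanExtension) (s : Cocone (K ⋙ Ext.right)) {A : C}
    (g : L.obj A ⟶ c.pt) :
    Ext.hom.app A ≫ Ext.right.map g ≫ hExt.mapCoconeDesc hc s =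
      Ext.hom.app A ≫ hc.coyonedaDesc Ext.right s _ g :=
  (hExt c.pt).comp_homEquiv_symm (descCoconeAt hc s) (.mk g)

noncomputable def IsPointwiseLeftKanExtension.isColimitMapCocone
    (hExt : Ext.IsPointwiseLeftKanExtension) :
    IsColimit (Ext.right.mapCocone c) where
  desc := hExt.mapCoconeDesc hc
  fac s j := (hExt (K.obj j)).hom_ext' fun A p => by
    have h := hExt.hom_app_map_mapCoconeDesc hc s (p ≫ c.ι.app j)
    rwa [Ext.right.map_comp_assoc, hc.coyonedaDesc_comp_ι] at h
  uniq s m hm := (hExt c.pt).hom_ext' fun A g => by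
    obtain ⟨j, p, rfl⟩ := exists_hom_of_preservesColimit_coyoneda hc g
    rw [hExt.hom_app_map_mapCoconeDesc, hc.coyonedaDesc_comp_ι, Ext.right.map_comp_assoc, ← hm j]
    rfl

lemma IsPointwiseLeftKanExtension.preservesColimit (hExt : Ext.IsPointwiseLeftKanExtension) :
    PreservesColimit K Ext.right :=
  ⟨fun hc => ⟨hExt.isColimitMapCocone hc⟩⟩

lemma IsPointwiseLeftKanExtension.preservesFilteredColimits
    [∀ A, IsFinitelyPresentable.{v} (L.obj A)] (hExt : Ext.IsPointwiseLeftKanExtension) :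
    PreservesFilteredColimits Ext.right :=
  ⟨fun _ _ _ => ⟨fun {_} => hExt.preservesColimit⟩⟩

end Functor.LeftExtension

namespace Ind

variable {C : Type v} [SmallCategory C]

noncomputable def coyonedaObjYonedaObjIso (A : C) :
    coyoneda.obj (Opposite.op (Ind.yoneda.obj A)) ≅
      Ind.inclusion C ⋙ (evaluation Cᵒᵖ (Type v)).obj (Opposite.op A) :=
  NatIso.ofComponents (fun Y => (Ind.inclusion.fullyFaithful.homEquiv.trans
      (((Ind.yonedaCompInclusion.app A).homCongr (Iso.refl _)).trans yonedaEquiv)).toIso)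
    fun f => by
      ext g
      simp [yonedaEquiv]

instance (A : C) : IsFinitelyPresentable.{v} (Ind.yoneda.obj A) := by
  rw [isFinitelyPresentable_iff_preservesFilteredColimits]
  exact ⟨fun _ _ _ => preservesColimitsOfShape_of_natIso (coyonedaObjYonedaObjIso A).symm⟩

instance : (Ind.yoneda (C := C)).IsDense where
  isDenseAt _ := ⟨Functor.DenseAt.ofCompFullyFaithful (G := Ind.inclusion C)
    ((denseAtYoneda _).ofNatIso Ind.yonedaCompInclusion.symm)⟩

instance (X : Ind C) : IsFiltered (CostructuredArrow (Ind.yoneda (C := C)) X) :=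
  have := ((isIndObject_iff _).1 (Ind.isIndObject_inclusion_obj X)).1
  IsFiltered.of_equivalence
    ((CostructuredArrow.post Ind.yoneda (Ind.inclusion C) X).asEquivalence.trans
      (CostructuredArrow.mapNatIso Ind.yonedaCompInclusion)).symm

variable {D : Type u} [Category.{v} D]

noncomputable def isPointwiseLeftKanExtensionOfPreservesFilteredColimits (F : Ind C ⥤ D)
    [PreservesFilteredColimits F] :
    (Functor.LeftExtension.mk F (𝟙 (Ind.yoneda ⋙ F))).IsPointwiseLeftKanExtension :=
  fun X => (Ind.yoneda.denseAt X).isPointwiseLeftKanExtensionAt F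

end Ind

end CategoryTheory

/-- For a small category `C` and a category `D` with all filtered colimits, a functor
`F : Ind C ⥤ D` preserves filtered colimits if and only if `F`, together with the identity
natural transformation on `Ind.yoneda ⋙ F`, is a left Kan extension of `Ind.yoneda ⋙ F`
along `Ind.yoneda : C ⥤ Ind C`. In particular, two filtered-colimit-preserving functors
`Ind C ⥤ D` whose composites with `Ind.yoneda` are naturally isomorphic are themselves
naturally isomorphic. -/
theorem ind_preservesFilteredColimits_iff_isLeftKanExtension
    {C : Type v} [SmallCategory C] {D : Type u} [Category.{v} D] [HasFilteredColimits D] :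
    (∀ F : Ind C ⥤ D,
      PreservesFilteredColimits F ↔
        F.IsLeftKanExtension (𝟙 (Ind.yoneda ⋙ F) : Ind.yoneda ⋙ F ⟶ Ind.yoneda ⋙ F)) ∧
    (∀ F G : Ind C ⥤ D, PreservesFilteredColimits F → PreservesFilteredColimits G →
      (Ind.yoneda ⋙ F ≅ Ind.yoneda ⋙ G) → Nonempty (F ≅ G)) := by
  have isLeftKanExtension (F : Ind C ⥤ D) [PreservesFilteredColimits F] :
      F.IsLeftKanExtension (𝟙 (Ind.yoneda ⋙ F)) :=
    (Ind.isPointwiseLeftKanExtensionOfPreservesFilteredColimits F).isLeftKanExtension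
  refine ⟨fun F => ⟨fun _ => isLeftKanExtension F, fun _ => ?_⟩, fun F G _ _ e => ?_⟩
  · exact Functor.LeftExtension.IsPointwiseLeftKanExtension.preservesFilteredColimits
      (Functor.isPointwiseLeftKanExtensionOfIsLeftKanExtension F (𝟙 (Ind.yoneda ⋙ F)))
  · have := isLeftKanExtension F
    have := isLeftKanExtension G
    exact ⟨Functor.leftKanExtensionUniqueOfIso F (𝟙 _) e G (𝟙 _)⟩
end

section
/- Let C be a small category with all finite limits, and let Lex(C, Type) denote the full subcategory of the functor category C ⥤ Type spanned by the finite-limit-preserving functors. Then: (a) the inclusion Lex(C, Type) ⥤ (C ⥤ Type) admits a left adjoint (i.e. Lex(C, Type) is a reflective subcategory); and (b) Lex(C, Type) is closed under filtered colimits in C ⥤ Type, so that the inclusion creates and preserves filtered colimits. -/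
/-!
By the Yoneda lemma, a functor `F : C ⥤ Type v` sends a limit cone over `K` to a limit cone
iff it is orthogonal to the comparison map `colim_j Hom(K j, -) ⟶ Hom(lim K, -)`. Taking `K`
to range over the (small) set of empty diagrams and cospans in `C`, the lex functors form the
orthogonality class of a small set of morphisms between finitely presentable objects of
`C ⥤ Type v` (finite colimits of corepresentables), so the orthogonal-reflection construction
provides the left adjoint. Closure under filtered colimits is the commutation of filtered
colimits with finite limits in `Type v`.
-/

open CategoryTheory Limits

universe v

/-- The old Mathlib notion: `P` is closed under colimits of shape `J`. -/
def ClosedUnderColimitsOfShape {C : Type*} [Category C] (J : Type*) [Category J]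
    (P : C → Prop) : Prop :=
  ∀ ⦃F : J ⥤ C⦄ ⦃c : Cocone F⦄ (_hc : IsColimit c), (∀ j, P (F.obj j)) → P c.pt

namespace CategoryTheory

open Opposite

namespace MorphismProperty

variable {D : Type*} [Category D]

lemma isLocal_sup (W₁ W₂ : MorphismProperty D) :
    (W₁ ⊔ W₂).isLocal = W₁.isLocal ⊓ W₂.isLocal := by
  ext Z
  simp only [isLocal_iff, sup_iff, or_imp, forall_and, Pi.inf_apply, inf_Prop_eq]

instance isSmall_sup (W₁ W₂ : MorphismProperty D) [IsSmall.{v} W₁] [IsSmall.{v} W₂] :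
    IsSmall.{v} (W₁ ⊔ W₂) where
  small_toSet := by rw [toSet_max]; infer_instance

end MorphismProperty

variable {C : Type v} [SmallCategory C]

instance isCardinalPresentable_coyoneda_obj (X : C) (κ : Cardinal.{v}) [Fact κ.IsRegular] :
    IsCardinalPresentable (coyoneda.obj (op X)) κ :=
  Functor.isCardinalAccessible_of_natIso (curriedCoyonedaLemma.app X).symm κ

section

-- Covariant analogue of `Presheaf.nonempty_isLimit_mapCone_iff`.
variable {J : Type*} [Category J] {K : J ⥤ C} (c : Cone K) {c' : Cocone (K.op ⋙ coyoneda)}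

def coconeCompCoyonedaHomEquiv (hc' : IsColimit c') (F : C ⥤ Type v) :
    (c'.pt ⟶ F) ≃ (K ⋙ F).sections where
  toFun f :=
    { val j := coyonedaEquiv (X := K.obj j) (c'.ι.app (op j) ≫ f)
      property {j j'} g := by
        dsimp only
        rw [Functor.comp_map, coyonedaEquiv_naturality, ← c'.w g.op, Category.assoc]
        rfl }
  invFun s := hc'.desc (Cocone.mk _
    { app j := coyonedaEquiv.symm (s.val j.unop)
      naturality j₁ j₂ g := by
        rw [← s.property g.unop]
        dsimp
        rw [coyonedaEquiv_symm_map, Category.comp_id] })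
  left_inv f := hc'.hom_ext (by simp)
  right_inv s := by ext; simp

def coconePtToCoyoneda (hc' : IsColimit c') : c'.pt ⟶ coyoneda.obj (op c.pt) :=
  hc'.desc (coyoneda.mapCocone c.op)

lemma coconeCompCoyonedaHomEquiv_comp (hc' : IsColimit c') (F : C ⥤ Type v) (x : F.obj c.pt) :
    coconeCompCoyonedaHomEquiv hc' F (coconePtToCoyoneda c hc' ≫ coyonedaEquiv.symm x) =
      Types.sectionOfCone (F.mapCone c) x := by
  ext j
  dsimp [coconeCompCoyonedaHomEquiv, coconePtToCoyoneda]
  rw [hc'.fac_assoc]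
  exact (coyonedaEquiv_naturality (coyonedaEquiv.symm x) (c.π.app j)).symm.trans
    (congrArg (F.map (c.π.app j)) (coyonedaEquiv.apply_symm_apply x))

lemma nonempty_isLimit_mapCone_iff_isLocal (hc' : IsColimit c') (F : C ⥤ Type v) :
    Nonempty (IsLimit (F.mapCone c)) ↔
      (MorphismProperty.single (coconePtToCoyoneda c hc')).isLocal F := by
  rw [Types.isLimit_iff_bijective_sectionOfCone,
    MorphismProperty.isLocal_single_iff_bijective,
    ← Function.Bijective.of_comp_iff' (coconeCompCoyonedaHomEquiv hc' F).bijective,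
    ← Function.Bijective.of_comp_iff _ coyonedaEquiv.symm.bijective]
  refine Iff.of_eq (congrArg Function.Bijective (funext fun x => ?_))
  exact (coconeCompCoyonedaHomEquiv_comp c hc' F x).symm

end

attribute [local instance] Cardinal.fact_isRegular_aleph0

section

variable (C) (J : Type*) [Category J] [HasLimitsOfShape J C]
  [HasColimitsOfShape Jᵒᵖ (C ⥤ Type v)]

def coyonedaLimitComparisons : MorphismProperty (C ⥤ Type v) :=
  ⨆ K : J ⥤ C, .single (coconePtToCoyoneda (limit.cone K) (colimit.isColimit (K.op ⋙ coyoneda)))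

instance [Small.{v} (J ⥤ C)] : MorphismProperty.IsSmall.{v} (coyonedaLimitComparisons C J) := by
  unfold coyonedaLimitComparisons
  infer_instance

lemma isLocal_coyonedaLimitComparisons :
    (coyonedaLimitComparisons C J).isLocal =
      ObjectProperty.preservesLimitsOfShape (C := Type v) J := by
  ext F
  simp only [coyonedaLimitComparisons, MorphismProperty.isLocal_iSup, iInf_apply, iInf_Prop_eq,
    ← nonempty_isLimit_mapCone_iff_isLocal, ObjectProperty.preservesLimitsOfShape_iff]
  exact ⟨fun h => ⟨fun {K} => preservesLimit_of_preserves_limit_cone (limit.isLimit K) (h K).some⟩,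
    fun _ K => ⟨isLimitOfPreserves F (limit.isLimit K)⟩⟩

lemma isCardinalPresentable_of_coyonedaLimitComparisons [FinCategory J] ⦃X Y : C ⥤ Type v⦄
    (f : X ⟶ Y) (hf : coyonedaLimitComparisons C J f) :
    IsCardinalPresentable X Cardinal.aleph0.{v} ∧ IsCardinalPresentable Y Cardinal.aleph0.{v} := by
  simp only [coyonedaLimitComparisons, MorphismProperty.iSup_iff] at hf
  obtain ⟨K, ⟨⟩⟩ := hf
  have (k : Jᵒᵖ) : IsCardinalPresentable ((K.op ⋙ coyoneda).obj k) Cardinal.aleph0.{v} :=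
    isCardinalPresentable_coyoneda_obj (K.obj k.unop) _
  refine ⟨isCardinalPresentable_of_isColimit _ (colimit.isColimit _) _ ?_, inferInstance⟩
  exact (hasCardinalLT_aleph0_iff _).2 inferInstance

end

section

variable (C) [HasFiniteLimits C]

def lexComparisons : MorphismProperty (C ⥤ Type v) :=
  coyonedaLimitComparisons C (Discrete.{0} PEmpty) ⊔ coyonedaLimitComparisons C WalkingCospan

instance : MorphismProperty.IsSmall.{v} (lexComparisons C) := by
  unfold lexComparisons
  infer_instance

lemma isLocal_lexComparisons :
    (lexComparisons C).isLocal = fun F : C ⥤ Type v => PreservesFiniteLimits F := by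
  ext F
  simp only [lexComparisons, MorphismProperty.isLocal_sup, isLocal_coyonedaLimitComparisons,
    Pi.inf_apply, inf_Prop_eq, ObjectProperty.preservesLimitsOfShape_iff]
  exact ⟨fun ⟨_, _⟩ => preservesFiniteLimits_of_preservesTerminal_and_pullbacks F,
    fun _ => ⟨inferInstance, inferInstance⟩⟩

lemma isCardinalPresentable_of_lexComparisons ⦃X Y : C ⥤ Type v⦄ (f : X ⟶ Y)
    (hf : lexComparisons C f) :
    IsCardinalPresentable X Cardinal.aleph0.{v} ∧ IsCardinalPresentable Y Cardinal.aleph0.{v} := by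
  rcases hf with hf | hf <;> exact isCardinalPresentable_of_coyonedaLimitComparisons C _ f hf

theorem isRightAdjoint_ι_preservesFiniteLimits :
    (ObjectProperty.ι fun F : C ⥤ Type v => PreservesFiniteLimits F).IsRightAdjoint := by
  rw [← isLocal_lexComparisons]
  exact MorphismProperty.isRightAdjoint_ι_isLocal _ Cardinal.aleph0.{v}
    (isCardinalPresentable_of_lexComparisons C)

end

end CategoryTheory

/-- For a small category `C` with all finite limits, the full subcategory `Lex(C, Type)` of the
functor category `C ⥤ Type` spanned by finite-limit-preserving functors is reflective (its
inclusion has a left adjoint), and it is closed under filtered colimits in `C ⥤ Type`, so that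
the inclusion creates and preserves filtered colimits. -/
theorem lex_reflective_and_closed_under_filtered_colimits
    {C : Type v} [SmallCategory C] [HasFiniteLimits C] :
    (ObjectProperty.ι
        (fun F : C ⥤ Type v => PreservesFiniteLimits F)).IsRightAdjoint ∧
      ∀ (J : Type v) (_ : SmallCategory J), IsFiltered J →
        ClosedUnderColimitsOfShape J (fun F : C ⥤ Type v => PreservesFiniteLimits F) ∧
        Nonempty (CreatesColimitsOfShape J
          (ObjectProperty.ι (fun F : C ⥤ Type v => PreservesFiniteLimits F))) ∧
        PreservesColimitsOfShape J
          (ObjectProperty.ι (fun F : C ⥤ Type v => PreservesFiniteLimits F)) := by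
  refine ⟨isRightAdjoint_ι_preservesFiniteLimits C, fun J _ _ => ?_⟩
  exact ⟨fun _ _ hc hF => ObjectProperty.prop_of_isColimit _ hc hF, ⟨inferInstance⟩, inferInstance⟩
end

section
/- Let C and C' be small categories each having all finite colimits. If there is an equivalence of categories Ind C ≌ Ind C', then there is an equivalence of categories C ≌ C'. -/
/-!
Filtered colimits in `Ind C` are computed in presheaves, where `Hom(yoneda c, -)` is evaluation
at `c`; so representables are finitely presentable in `Ind C`. Conversely, a finitely presentable
ind-object `X` is a filtered colimit of representables, so `𝟙 X` factors through one of them and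
`X` is a retract of a representable. When `C` is idempotent complete (as it is when it has
coequalizers) such a retract is itself representable. Hence `C` is recovered from `Ind C` as its
full subcategory of finitely presentable objects, which every equivalence preserves.
-/

open CategoryTheory Limits CategoryTheory.Idempotents

universe w v v₁ v₂ u₁ u₂

attribute [local instance] Cardinal.fact_isRegular_aleph0

namespace CategoryTheory

section

variable {C : Type u₁} [Category.{v₁} C] {D : Type u₂} [Category.{v₂} D]

lemma Functor.FullyFaithful.isCardinalPresentable_of_obj {F : C ⥤ D} (hF : F.FullyFaithful)
    (κ : Cardinal.{w}) [Fact κ.IsRegular] [F.IsCardinalAccessible κ] (X : C)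
    [IsCardinalPresentable (F.obj X) κ] : IsCardinalPresentable X κ := by
  rw [isCardinalPresentable_iff_isCardinalAccessible_uliftCoyoneda_obj.{v₂}]
  exact Functor.isCardinalAccessible_of_natIso (hF.homNatIso' X) κ

lemma Functor.FullyFaithful.mem_essImage_of_retract [IsIdempotentComplete C] {F : C ⥤ D}
    (hF : F.FullyFaithful) {X : D} {c : C} (h : Retract X (F.obj c)) : F.essImage X := by
  obtain ⟨Y, i, p, hip, hpi⟩ := IsIdempotentComplete.idempotents_split c
    (hF.preimage (h.r ≫ h.i)) (hF.map_injective (by simp))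
  have hpi' : F.map p ≫ F.map i = h.r ≫ h.i := by rw [← F.map_comp, hpi, hF.map_preimage]
  refine ⟨Y, ⟨⟨F.map i ≫ h.r, h.i ≫ F.map p, ?_, ?_⟩⟩⟩
  · calc _ = F.map i ≫ (h.r ≫ h.i) ≫ F.map p := by simp only [Category.assoc]
      _ = F.map (i ≫ p ≫ i ≫ p) := by
        rw [← hpi']; simp only [Functor.map_comp, Category.assoc]
      _ = 𝟙 _ := by rw [reassoc_of% hip, hip, F.map_id]
  · calc _ = h.i ≫ (F.map p ≫ F.map i) ≫ h.r := by simp only [Category.assoc]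
      _ = 𝟙 X := by rw [hpi']; simp

variable (C) in
lemma isIdempotentComplete_of_hasCoequalizers [HasCoequalizers C] : IsIdempotentComplete C :=
  isIdempotentComplete_of_isIdempotentComplete_opposite
    ((isIdempotentComplete_iff_hasEqualizer_of_id_and_idempotent _).2 fun _ _ _ ↦ inferInstance)

noncomputable def Equivalence.congrIsCardinalPresentable (κ : Cardinal.{w}) [Fact κ.IsRegular]
    (e : C ≌ D) :
    (isCardinalPresentable C κ).FullSubcategory ≌ (isCardinalPresentable D κ).FullSubcategory :=
  e.congrFullSubcategory (by ext X; exact isCardinalPresentable_iff_of_isEquivalence X κ e.functor)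

end

namespace Ind

variable {C : Type v} [SmallCategory C]

instance preservesFilteredColimits_inclusion : PreservesFilteredColimits (Ind.inclusion C) where
  preserves_filtered_colimits _ _ _ := inferInstance

instance isFinitelyPresentable_yoneda_obj (c : C) :
    IsFinitelyPresentable.{v} (Ind.yoneda.obj c) := by
  have : (Ind.inclusion C).IsFinitelyAccessible :=
    Functor.isFinitelyAccessible_iff_preservesFilteredColimits.2 inferInstance
  have : IsFinitelyPresentable.{v} ((Ind.inclusion C).obj (Ind.yoneda.obj c)) :=
    isCardinalPresentable_of_iso
      ((uliftYonedaIsoYoneda.{0}.app c).trans (Ind.yonedaCompInclusion.app c).symm) _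
  exact Ind.inclusion.fullyFaithful.isCardinalPresentable_of_obj _ _

lemma exists_retract_yoneda_obj (X : Ind C) [IsFinitelyPresentable.{v} X] :
    ∃ c : C, Nonempty (Retract X (Ind.yoneda.obj c)) := by
  have := X.presentation.hI
  let F := X.presentation.F ⋙ Ind.yoneda
  obtain ⟨j, i, hi⟩ := IsFinitelyPresentable.exists_hom_of_isColimit
    (colimit.isColimit F) X.colimitPresentationCompYoneda.inv
  refine ⟨_, ⟨⟨i, colimit.ι F j ≫ X.colimitPresentationCompYoneda.hom, ?_⟩⟩⟩
  simp only [← Category.assoc, colimit.cocone_ι] at hi ⊢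
  rw [hi, Iso.inv_hom_id]

lemma essImage_yoneda [IsIdempotentComplete C] :
    Ind.yoneda.essImage = ObjectProperty.isFinitelyPresentable.{v} (Ind C) := by
  ext X
  refine ⟨fun ⟨c, ⟨e⟩⟩ ↦ isCardinalPresentable_of_iso e _,
    fun (_ : IsFinitelyPresentable X) ↦ ?_⟩
  obtain ⟨c, ⟨h⟩⟩ := exists_retract_yoneda_obj X
  exact Ind.yoneda.fullyFaithful.mem_essImage_of_retract h

instance [IsIdempotentComplete C] :
    (ObjectProperty.ιOfLE (essImage_yoneda (C := C)).le).IsEquivalence := by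
  rw [ObjectProperty.isEquivalence_ιOfLE_iff]
  exact (essImage_yoneda (C := C)).ge.trans (ObjectProperty.le_isoClosure _)

noncomputable def yonedaEquivIsFinitelyPresentable [IsIdempotentComplete C] :
    C ≌ (ObjectProperty.isFinitelyPresentable.{v} (Ind C)).FullSubcategory :=
  Ind.yoneda.toEssImage.asEquivalence.trans (ObjectProperty.ιOfLE _).asEquivalence

end Ind

end CategoryTheory

/-- If `C` and `C'` are small categories with all finite colimits and `Ind C ≌ Ind C'`, then
`C ≌ C'`. -/
theorem equiv_of_ind_equiv {C : Type v} [SmallCategory C] {C' : Type v} [SmallCategory C']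
    [HasFiniteColimits C] [HasFiniteColimits C'] (e : Ind C ≌ Ind C') :
    Nonempty (C ≌ C') := by
  have := isIdempotentComplete_of_hasCoequalizers C
  have := isIdempotentComplete_of_hasCoequalizers C'
  exact ⟨Ind.yonedaEquivIsFinitelyPresentable.trans
    ((e.congrIsCardinalPresentable _).trans Ind.yonedaEquivIsFinitelyPresentable.symm)⟩
end

section
/- For a small category C, a presheaf F : Cᵒᵖ ⥤ Type is a compact (finitely presentable) object of the presheaf category, i.e. Hom(F, -) : (Cᵒᵖ ⥤ Type) ⥤ Type preserves filtered colimits, if and only if F is a retract of a presheaf that is a colimit of a finite diagram of representable presheaves. -/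
/-!
Representables are finitely presentable by the Yoneda lemma, and finitely presentable objects
are closed under finite colimits and retracts.

Conversely, the colimit of any diagram `D : J ⥤ A` is the filtered colimit, over the finite sets
`k` of arrows of `J`, of the colimit of `D` restricted to the graph `k`: the multicoequalizer
gluing the `D.obj` of the endpoints of `k` along the `D.map` of its arrows. Since a presheaf `F`
is the colimit of representables over its category of elements, it is thereby a filtered colimit
of finite colimits of representables. If `F` is finitely presentable, `𝟙 F` factors through one
of them, which exhibits `F` as its retract.
-/

open CategoryTheory Limits

universe v

/-- A presheaf is a finite colimit of representables if it is the colimit of a diagram indexed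
by a finite category whose values are representable presheaves. -/
def IsFiniteColimitOfRepresentables {C : Type v} [SmallCategory C]
    (F : Cᵒᵖ ⥤ Type v) : Prop :=
  ∃ (J : Type v) (_ : SmallCategory J) (_ : FinCategory J) (D : J ⥤ (Cᵒᵖ ⥤ Type v)),
    (∀ j, (D.obj j).IsRepresentable) ∧ Nonempty (colimit D ≅ F)

namespace CategoryTheory.Limits

section FiniteSubgraphs

open scoped Classical

variable {J : Type*} [Category J] {A : Type*} [Category A]

noncomputable def arrowEndpoints (k : Finset (Arrow J)) : Finset J :=
  k.image Arrow.left ∪ k.image Arrow.right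

lemma left_mem_arrowEndpoints {k : Finset (Arrow J)} {f : Arrow J} (hf : f ∈ k) :
    f.left ∈ arrowEndpoints k :=
  Finset.mem_union_left _ (Finset.mem_image_of_mem _ hf)

lemma right_mem_arrowEndpoints {k : Finset (Arrow J)} {f : Arrow J} (hf : f ∈ k) :
    f.right ∈ arrowEndpoints k :=
  Finset.mem_union_right _ (Finset.mem_image_of_mem _ hf)

lemma mem_arrowEndpoints_singleton_id (j : J) : j ∈ arrowEndpoints {Arrow.mk (𝟙 j)} :=
  left_mem_arrowEndpoints (Finset.mem_singleton_self _)

lemma arrowEndpoints_mono {k k' : Finset (Arrow J)} (h : k ⊆ k') :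
    arrowEndpoints k ⊆ arrowEndpoints k' :=
  Finset.union_subset_union (Finset.image_subset_image h) (Finset.image_subset_image h)

noncomputable abbrev multispanShapeOfArrows (k : Finset (Arrow J)) : MultispanShape where
  L := k
  R := arrowEndpoints k
  fst f := ⟨f.1.left, left_mem_arrowEndpoints f.2⟩
  snd f := ⟨f.1.right, right_mem_arrowEndpoints f.2⟩

noncomputable abbrev multispanIndexOfArrows (D : J ⥤ A) (k : Finset (Arrow J)) :
    MultispanIndex (multispanShapeOfArrows k) A where
  left f := D.obj f.1.left
  right x := D.obj x.1
  fst _ := 𝟙 _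
  snd f := D.map f.1.hom

variable [HasFiniteColimits A] (D : J ⥤ A)

noncomputable def finiteSubgraphColimit : Finset (Arrow J) ⥤ A where
  obj k := multicoequalizer (multispanIndexOfArrows D k)
  map {k k'} h := Multicoequalizer.desc _ _
    (fun x => Multicoequalizer.π (multispanIndexOfArrows D k')
      ⟨x.1, arrowEndpoints_mono (leOfHom h) x.2⟩)
    (fun f => Multicoequalizer.condition (multispanIndexOfArrows D k') ⟨f.1, leOfHom h f.2⟩)
  map_id _ := by ext; simp [Multicoequalizer.π_desc]
  map_comp _ _ := by ext; simp [Multicoequalizer.π_desc, Multicoequalizer.π_desc_assoc]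

namespace finiteSubgraphColimit

noncomputable def ι (k : Finset (Arrow J)) (x : arrowEndpoints k) :
    D.obj x.1 ⟶ (finiteSubgraphColimit D).obj k :=
  Multicoequalizer.π (multispanIndexOfArrows D k) x

variable {D}

@[ext]
lemma hom_ext {k : Finset (Arrow J)} {X : A} {g g' : (finiteSubgraphColimit D).obj k ⟶ X}
    (h : ∀ x, ι D k x ≫ g = ι D k x ≫ g') : g = g' :=
  Multicoequalizer.hom_ext _ _ _ h

@[simp]
lemma ι_map {k k' : Finset (Arrow J)} (h : k ⟶ k') (x : arrowEndpoints k) :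
    ι D k x ≫ (finiteSubgraphColimit D).map h =
      ι D k' ⟨x.1, arrowEndpoints_mono (leOfHom h) x.2⟩ :=
  Multicoequalizer.π_desc _ _ _ _ _

lemma w {k : Finset (Arrow J)} {a b : J} (f : a ⟶ b) (hf : Arrow.mk f ∈ k) :
    D.map f ≫ ι D k ⟨b, right_mem_arrowEndpoints hf⟩ = ι D k ⟨a, left_mem_arrowEndpoints hf⟩ :=
  ((Category.id_comp _).symm.trans
    (Multicoequalizer.condition (multispanIndexOfArrows D k) ⟨_, hf⟩)).symm

noncomputable def desc {k : Finset (Arrow J)} {X : A} (g : ∀ x : arrowEndpoints k, D.obj x.1 ⟶ X)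
    (hg : ∀ f (hf : f ∈ k), D.map f.hom ≫ g ⟨f.right, right_mem_arrowEndpoints hf⟩ =
      g ⟨f.left, left_mem_arrowEndpoints hf⟩) :
    (finiteSubgraphColimit D).obj k ⟶ X :=
  Multicoequalizer.desc (multispanIndexOfArrows D k) X g
    (fun f => (Category.id_comp _).trans (hg f.1 f.2).symm)

@[simp]
lemma ι_desc {k : Finset (Arrow J)} {X : A} (g : ∀ x : arrowEndpoints k, D.obj x.1 ⟶ X)
    (hg : ∀ f (hf : f ∈ k), D.map f.hom ≫ g ⟨f.right, right_mem_arrowEndpoints hf⟩ =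
      g ⟨f.left, left_mem_arrowEndpoints hf⟩)
    (x : arrowEndpoints k) : ι D k x ≫ desc g hg = g x :=
  Multicoequalizer.π_desc _ _ _ _ _

noncomputable def cocone (c : Cocone D) : Cocone (finiteSubgraphColimit D) where
  pt := c.pt
  ι.app k := desc (fun x => c.ι.app x.1) (fun f _ => c.w f.hom)
  ι.naturality _ _ _ := by ext; simp [← Category.assoc]

lemma ι_cocone_ι_app_assoc (c : Cocone D) (k : Finset (Arrow J)) (x : arrowEndpoints k)
    {Z : A} (g : c.pt ⟶ Z) : ι D k x ≫ (cocone c).ι.app k ≫ g = c.ι.app x.1 ≫ g :=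
  (Category.assoc _ _ _).symm.trans (congrArg (· ≫ g) (ι_desc _ (fun f _ => c.w f.hom) x))

lemma ι_comp_ι_app_eq_of_subset (s : Cocone (finiteSubgraphColimit D))
    {k k' : Finset (Arrow J)} (h : k ⊆ k') (x : arrowEndpoints k) :
    ι D k x ≫ s.ι.app k = ι D k' ⟨x.1, arrowEndpoints_mono h x.2⟩ ≫ s.ι.app k' := by
  rw [← s.w (homOfLE h), ← Category.assoc, ι_map]

lemma ι_comp_ι_app_eq (s : Cocone (finiteSubgraphColimit D)) {k k' : Finset (Arrow J)} {j : J}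
    (hj : j ∈ arrowEndpoints k) (hj' : j ∈ arrowEndpoints k') :
    ι D k ⟨j, hj⟩ ≫ s.ι.app k = ι D k' ⟨j, hj'⟩ ≫ s.ι.app k' :=
  (ι_comp_ι_app_eq_of_subset s Finset.subset_union_left _).trans
    (ι_comp_ι_app_eq_of_subset s Finset.subset_union_right ⟨j, hj'⟩).symm

noncomputable def coconeOfCocone (s : Cocone (finiteSubgraphColimit D)) : Cocone D where
  pt := s.pt
  ι.app j := ι D {Arrow.mk (𝟙 j)} ⟨j, mem_arrowEndpoints_singleton_id j⟩ ≫ s.ι.app _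
  ι.naturality j j' f := by
    have hf := Finset.mem_singleton_self (Arrow.mk f)
    simp only [Functor.const_obj_obj, Functor.const_obj_map, Category.comp_id]
    rw [ι_comp_ι_app_eq s (j := j') _ (right_mem_arrowEndpoints hf), ← Category.assoc, w f hf]
    exact ι_comp_ι_app_eq s _ _

lemma ι_comp_ι_app (s : Cocone (finiteSubgraphColimit D)) (k : Finset (Arrow J))
    (x : arrowEndpoints k) : ι D k x ≫ s.ι.app k = (coconeOfCocone s).ι.app x.1 :=
  ι_comp_ι_app_eq s _ _

noncomputable def isColimitCocone {c : Cocone D} (hc : IsColimit c) : IsColimit (cocone c) where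
  desc s := hc.desc (coconeOfCocone s)
  fac s k := hom_ext fun x =>
    (ι_cocone_ι_app_assoc c k x _).trans ((hc.fac _ _).trans (ι_comp_ι_app s k x).symm)
  uniq s m hm := hc.uniq (coconeOfCocone s) m fun j =>
    (ι_cocone_ι_app_assoc c _ ⟨j, mem_arrowEndpoints_singleton_id j⟩ m).symm.trans
      ((congrArg _ (hm _)).trans (ι_comp_ι_app s _ _))

end finiteSubgraphColimit

end FiniteSubgraphs

end CategoryTheory.Limits

attribute [local instance] Cardinal.fact_isRegular_aleph0

section Presheaf

variable {C : Type v} [SmallCategory C]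

lemma CategoryTheory.Functor.IsRepresentable.isFinitelyPresentable
    (F : Cᵒᵖ ⥤ Type v) [F.IsRepresentable] : IsFinitelyPresentable.{v} F :=
  isCardinalPresentable_of_iso ((uliftYonedaIsoYoneda.{v}.app F.reprX).trans F.reprW) _

lemma IsFiniteColimitOfRepresentables.isFinitelyPresentable
    {F : Cᵒᵖ ⥤ Type v} (hF : IsFiniteColimitOfRepresentables F) :
    IsFinitelyPresentable.{v} F := by
  obtain ⟨J, _, _, D, hD, ⟨e⟩⟩ := hF
  have (j : J) : IsFinitelyPresentable.{v} (D.obj j) :=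
    Functor.IsRepresentable.isFinitelyPresentable _
  have : IsFinitelyPresentable.{v} (colimit D) :=
    isCardinalPresentable_of_isColimit _ (colimit.isColimit D) _
      ((hasCardinalLT_aleph0_iff _).2 inferInstance)
  exact isCardinalPresentable_of_iso e _

lemma isFiniteColimitOfRepresentables_finiteSubgraphColimit_obj
    {J : Type v} [SmallCategory J] (D : J ⥤ Cᵒᵖ ⥤ Type v) (hD : ∀ j, (D.obj j).IsRepresentable)
    (k : Finset (Arrow J)) : IsFiniteColimitOfRepresentables ((finiteSubgraphColimit D).obj k) := by
  classical
  refine ⟨_, _, inferInstance, (multispanIndexOfArrows D k).multispan, ?_, ⟨Iso.refl _⟩⟩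
  rintro (f | x)
  exacts [hD _, hD _]

end Presheaf

/-- For a small category `C`, a presheaf `F : Cᵒᵖ ⥤ Type` is a compact (finitely presentable)
object of the presheaf category, i.e. `Hom(F, -)` preserves filtered colimits, if and only if
`F` is a retract of a finite colimit of representables. -/
theorem compact_presheaf_iff_retract_of_finite_colimit_of_representables
    {C : Type v} [SmallCategory C] (F : Cᵒᵖ ⥤ Type v) :
    PreservesFilteredColimits (coyoneda.obj (Opposite.op F)) ↔
      ∃ G : Cᵒᵖ ⥤ Type v, IsFiniteColimitOfRepresentables G ∧
        ∃ (s : F ⟶ G) (r : G ⟶ F), s ≫ r = 𝟙 F := by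
  rw [← isFinitelyPresentable_iff_preservesFilteredColimits]
  constructor
  · intro hF
    obtain ⟨k, s, hs⟩ := IsFinitelyPresentable.exists_hom_of_isColimit
      (finiteSubgraphColimit.isColimitCocone (Presheaf.isColimitTautologicalCocone F)) (𝟙 F)
    refine ⟨_, isFiniteColimitOfRepresentables_finiteSubgraphColimit_obj _ ?_ k, s, _, hs⟩
    exact fun j => inferInstanceAs (yoneda.obj j.left).IsRepresentable
  · rintro ⟨G, hG, s, r, hsr⟩
    have := hG.isFinitelyPresentable
    exact Retract.isCardinalPresentable ⟨s, r, hsr⟩ _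
end
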